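/- If Assumption (A1) holds, then for every δ ∈ (0,1), with probability at least 1 − δ: ‖D̂'_n(u*) − D̄'(u*)‖ ≤ √K ( √( log(2K²/δ) / (2 λ̲ n) ) + (K+1) C / √n ), where ‖·‖ is the Euclidean norm on ℝ^K and u* is the zero of D̄' normalized by u*_K = log λ_K. -/

import Mathlib

/-! At a fixed `u`, write `gₗ = e^{uₗ} ωₗ / ∑ₖ e^{uₖ} ωₖ ∈ [0, 1]` and `P̂ₖ` for the empirical
measure of stratum `k`. Since `P̃ₙ = ∑ₖ λ̂ₖ P̂ₖ` and `P̄ = ∑ₖ λₖ Pₖ`, coordinate `l` of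
`D̂'ₙ(u) - D̄'(u)` equals
`∑ₖ λ̂ₖ (P̂ₖ gₗ - Pₖ gₗ) + ∑ₖ (λ̂ₖ - λₖ) Pₖ gₗ + (λₗ - λ̂ₗ)`,
and under (A1) the last two terms are at most `(K + 1) C / √n`. By Hoeffding's inequality and
`nₖ ≥ λ̲ n`, each of the `K²` deviations `|P̂ₖ gₗ - Pₖ gₗ|` exceeds
`√(log (2K²/δ) / (2 λ̲ n))` with probability at most `δ / K²`. A union bound and
`‖v‖₂ ≤ √K ‖v‖_∞` conclude. -/

open MeasureTheory ProbabilityTheory Real Finset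
open scoped ENNReal NNReal

noncomputable section

namespace SelBias

variable {Z : Type*} [MeasurableSpace Z]

/-- Empirical distribution of the `nk` points `X 0, …, X (nk-1)`. -/
def empDist (nk : ℕ) (X : ℕ → Z) : Measure Z :=
  (nk : ℝ≥0∞)⁻¹ • ∑ i ∈ Finset.range nk, Measure.dirac (X i)

/-- Pooled empirical distribution `P̃_n = ∑_k (n_k/n) P̂_k`. -/
def pooledDist {K : ℕ} (nv : Fin K → ℕ) (X : Fin K → ℕ → Z) : Measure Z :=
  ∑ k : Fin K, ((nv k : ℝ≥0∞) / ((∑ j : Fin K, nv j : ℕ) : ℝ≥0∞)) • empDist (nv k) (X k)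

/-- The functional `Γ_k(W)` associated with weights `lam` and measure `μ`. -/
def Gam {K : ℕ} (ω : Fin K → Z → ℝ) (lam : Fin K → ℝ) (μ : Measure Z)
    (W : Fin K → ℝ) (k : Fin K) : ℝ :=
  (W k)⁻¹ * ∫ z, ω k z / (∑ l : Fin K, lam l / W l * ω l z) ∂μ

/-- `W` is a positive solution of the system `Γ_k(W) = 1`, normalized by `W_K = 1`. -/
def IsSol {K : ℕ} (hK : 0 < K) (ω : Fin K → Z → ℝ) (lam : Fin K → ℝ) (μ : Measure Z)
    (W : Fin K → ℝ) : Prop :=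
  (∀ k, 0 < W k) ∧ W ⟨K - 1, Nat.sub_lt hK one_pos⟩ = 1 ∧ ∀ k, Gam ω lam μ W k = 1

/-- The normalizing constants `Ω_k = ∫ ω_k dP`. -/
def Om {K : ℕ} (ω : Fin K → Z → ℝ) (P : Measure Z) (k : Fin K) : ℝ := ∫ z, ω k z ∂P

/-- The biased distribution `P_k = (ω_k/Ω_k)·P`. -/
def Pk {K : ℕ} (ω : Fin K → Z → ℝ) (P : Measure Z) (k : Fin K) : Measure Z :=
  P.withDensity fun z => ENNReal.ofReal (ω k z / Om ω P k)

/-- The mixture `P̄ = ∑_k λ_k P_k`. -/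
def Pbar {K : ℕ} (ω : Fin K → Z → ℝ) (P : Measure Z) (lam : Fin K → ℝ) : Measure Z :=
  ∑ k : Fin K, ENNReal.ofReal (lam k) • Pk ω P k

/-- The estimated normalizing constants built from a solution `W`. -/
def OmHat {K : ℕ} (ω : Fin K → Z → ℝ) (lamhat : Fin K → ℝ) (μ : Measure Z)
    (W : Fin K → ℝ) (l : Fin K) : ℝ :=
  W l / ∫ z, (∑ k : Fin K, lamhat k * ω k z / W k)⁻¹ ∂μ

/-- The (debiased) risk functional. -/
def risk {K : ℕ} {Θ : Type*} (ω : Fin K → Z → ℝ) (lamhat : Fin K → ℝ) (μ : Measure Z)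
    (Ωh : Fin K → ℝ) (ψ : Z → Θ → ℝ) (θ : Θ) : ℝ :=
  ∫ z, (∑ k : Fin K, lamhat k * ω k z / Ωh k)⁻¹ * ψ z θ ∂μ

/-- The graph `G_κ`: `k ∼ l` iff `∫ ω_k ω_l dP ≥ κ`. -/
def biasGraph {K : ℕ} (ω : Fin K → Z → ℝ) (P : Measure Z) (κ : ℝ) : SimpleGraph (Fin K) where
  Adj k l := k ≠ l ∧ κ ≤ ∫ z, ω k z * ω l z ∂P
  symm := ⟨fun k l h => ⟨h.1.symm, by simpa [mul_comm] using h.2⟩⟩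
  loopless := ⟨fun k h => h.1 rfl⟩

/-- Euclidean norm on `ℝ^K`. -/
def eNorm {K : ℕ} (v : Fin K → ℝ) : ℝ := Real.sqrt (∑ k, v k ^ 2)

/-- The gradient `D'(u)` of the convex criterion, w.r.t. weights `lam` and measure `μ`. -/
def Dp {K : ℕ} (ω : Fin K → Z → ℝ) (lam : Fin K → ℝ) (μ : Measure Z)
    (u : Fin K → ℝ) (l : Fin K) : ℝ :=
  (∫ z, Real.exp (u l) * ω l z / (∑ k : Fin K, Real.exp (u k) * ω k z) ∂μ) - lam l

/-- The Hessian `D''(u)` of the convex criterion w.r.t. measure `μ`. -/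
def Hess {K : ℕ} (ω : Fin K → Z → ℝ) (μ : Measure Z) (u : Fin K → ℝ) (l l' : Fin K) : ℝ :=
  ∫ z, ((if l = l' then Real.exp (u l) * ω l z / (∑ k : Fin K, Real.exp (u k) * ω k z) else 0)
      - Real.exp (u l) * ω l z * (Real.exp (u l') * ω l' z)
        / (∑ k : Fin K, Real.exp (u k) * ω k z) ^ 2) ∂μ

end SelBias

namespace ProbabilityTheory

variable {Ω : Type*} [MeasurableSpace Ω] {μ : Measure Ω}

lemma HasSubgaussianMGF.measureReal_abs_ge_le {X : Ω → ℝ} {c : ℝ≥0}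
    (h : HasSubgaussianMGF X c μ) {ε : ℝ} (hε : 0 ≤ ε) :
    μ.real {ω | ε ≤ |X ω|} ≤ 2 * exp (-ε ^ 2 / (2 * c)) := by
  have hsplit : {ω | ε ≤ |X ω|} = {ω | ε ≤ X ω} ∪ {ω | ε ≤ (-X) ω} :=
    Set.ext fun ω ↦ le_abs (a := ε) (b := X ω)
  calc μ.real {ω | ε ≤ |X ω|}
      ≤ μ.real {ω | ε ≤ X ω} + μ.real {ω | ε ≤ (-X) ω} := hsplit ▸ measureReal_union_le _ _
    _ ≤ exp (-ε ^ 2 / (2 * c)) + exp (-ε ^ 2 / (2 * c)) :=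
      add_le_add (h.measure_ge_le hε) (h.neg.measure_ge_le hε)
    _ = 2 * exp (-ε ^ 2 / (2 * c)) := by ring

lemma measureReal_abs_sum_sub_integral_ge_le [IsProbabilityMeasure μ] {ι : Type*}
    {X : ι → Ω → ℝ} (h_indep : iIndepFun X μ) (hm : ∀ i, Measurable (X i)) {a b : ℝ}
    (hb : ∀ i ω, X i ω ∈ Set.Icc a b) (s : Finset ι) {ε : ℝ} (hε : 0 ≤ ε) :
    μ.real {ω | ε ≤ |∑ i ∈ s, (X i ω - μ[X i])|} ≤
      2 * exp (-2 * ε ^ 2 / (#s * (b - a) ^ 2)) := by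
  have h_indep' : iIndepFun (fun i ω ↦ X i ω - μ[X i]) μ :=
    h_indep.comp (fun i (x : ℝ) ↦ x - ∫ y, X i y ∂μ) fun i ↦ measurable_id.sub_const _
  have hsum := HasSubgaussianMGF.sum_of_iIndepFun h_indep' (s := s) fun i _ ↦
    hasSubgaussianMGF_of_mem_Icc (hm i).aemeasurable (ae_of_all _ (hb i))
  refine (hsum.measureReal_abs_ge_le hε).trans_eq ?_
  rw [Finset.sum_const, nsmul_eq_mul]
  push_cast
  rw [Real.norm_eq_abs, div_pow, sq_abs,
    show 2 * (#s * ((b - a) ^ 2 / 2 ^ 2)) = #s * (b - a) ^ 2 / 2 by ring, div_div_eq_mul_div]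
  ring_nf

lemma ofReal_one_sub_sum_le_measure [IsProbabilityMeasure μ] {ι : Type*} (s : Finset ι)
    {B : ι → Set Ω} {η : ι → ℝ} (hB : ∀ i ∈ s, μ.real (B i) ≤ η i) {S : Set Ω}
    (hS : ∀ ω, (∀ i ∈ s, ω ∉ B i) → ω ∈ S) :
    ENNReal.ofReal (1 - ∑ i ∈ s, η i) ≤ μ S := by
  set A := ⋃ i ∈ s, B i
  have hη : 0 ≤ ∑ i ∈ s, η i :=
    Finset.sum_nonneg fun i hi ↦ measureReal_nonneg.trans (hB i hi)
  have hA : μ A ≤ ENNReal.ofReal (∑ i ∈ s, η i) := by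
    calc μ A ≤ ∑ i ∈ s, μ (B i) := measure_biUnion_finset_le s B
      _ = ∑ i ∈ s, ENNReal.ofReal (μ.real (B i)) := by simp [ofReal_measureReal]
      _ ≤ ∑ i ∈ s, ENNReal.ofReal (η i) := Finset.sum_le_sum fun i hi ↦
          ENNReal.ofReal_le_ofReal (hB i hi)
      _ = ENNReal.ofReal (∑ i ∈ s, η i) := (ENNReal.ofReal_sum_of_nonneg fun i hi ↦
          measureReal_nonneg.trans (hB i hi)).symm
  have hAS : Aᶜ ⊆ S := fun ω hω ↦ hS ω fun i hi hωi ↦ hω (Set.mem_biUnion hi hωi)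
  calc ENNReal.ofReal (1 - ∑ i ∈ s, η i) = 1 - ENNReal.ofReal (∑ i ∈ s, η i) := by
        rw [ENNReal.ofReal_sub _ hη, ENNReal.ofReal_one]
    _ ≤ 1 - μ A := tsub_le_tsub_left hA 1
    _ ≤ μ Aᶜ := tsub_le_iff_left.2 (by simpa using measure_univ_le_add_compl (μ := μ) A)
    _ ≤ μ S := measure_mono hAS

end ProbabilityTheory

lemma abs_sum_mul_sub_sum_mul_le {ι : Type*} [Fintype ι] {w v A m : ι → ℝ} {t b : ℝ}
    (hw : ∀ k, 0 ≤ w k) (hw_sum : ∑ k, w k = 1) (hA : ∀ k, |A k - m k| ≤ t)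
    (hm : ∀ k, m k ∈ Set.Icc 0 1) (hv : ∀ k, |v k - w k| ≤ b) (l : ι) :
    |(∑ k, w k * A k - w l) - (∑ k, v k * m k - v l)| ≤ t + (Fintype.card ι + 1) * b := by
  have hsplit : (∑ k, w k * A k - w l) - (∑ k, v k * m k - v l) =
      ∑ k, w k * (A k - m k) - ∑ k, (v k - w k) * m k + (v l - w l) := by
    simp only [mul_sub, sub_mul, Finset.sum_sub_distrib]
    ring
  have hsample : |∑ k, w k * (A k - m k)| ≤ t :=
    calc |∑ k, w k * (A k - m k)| ≤ ∑ k, w k * t := by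
          refine (Finset.abs_sum_le_sum_abs _ _).trans (Finset.sum_le_sum fun k _ ↦ ?_)
          rw [abs_mul, abs_of_nonneg (hw k)]
          exact mul_le_mul_of_nonneg_left (hA k) (hw k)
      _ = t := by rw [← Finset.sum_mul, hw_sum, one_mul]
  have hweights : |∑ k, (v k - w k) * m k| ≤ Fintype.card ι * b :=
    calc |∑ k, (v k - w k) * m k| ≤ ∑ _k : ι, b := by
          refine (Finset.abs_sum_le_sum_abs _ _).trans (Finset.sum_le_sum fun k _ ↦ ?_)
          rw [abs_mul, abs_of_nonneg (hm k).1]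
          exact (mul_le_of_le_one_right (abs_nonneg _) (hm k).2).trans (hv k)
      _ = Fintype.card ι * b := by simp
  rw [hsplit]
  calc _ ≤ |∑ k, w k * (A k - m k)| + |∑ k, (v k - w k) * m k| + |v l - w l| :=
        (abs_add_le _ _).trans (add_le_add_left (abs_sub _ _) _)
    _ ≤ t + Fintype.card ι * b + b := by gcongr; exact hv l
    _ = t + (Fintype.card ι + 1) * b := by ring

lemma two_mul_exp_neg_le {η s : ℝ} (hη : 0 < η) (h : log (2 / η) ≤ s) : 2 * exp (-s) ≤ η :=
  calc 2 * exp (-s) ≤ 2 * exp (-log (2 / η)) := by gcongr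
    _ = η := by rw [exp_neg, exp_log (by positivity), inv_div]; field_simp

lemma two_mul_exp_neg_mul_sqrt_sq_le_div {M δ c N m : ℝ} (hδ : 0 < δ) (hδM : δ ≤ 2 * M)
    (hcN : 0 < c * N) (hm : c * N ≤ m) :
    2 * exp (-(2 * m * √(log (2 * M / δ) / (2 * c * N)) ^ 2)) ≤ δ / M := by
  have hM : 0 < M := by linarith
  have hL : 0 ≤ log (2 * M / δ) := log_nonneg ((one_le_div hδ).2 hδM)
  have h2cN : 0 < 2 * c * N := by rw [mul_assoc]; positivity
  refine two_mul_exp_neg_le (div_pos hδ hM) ?_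
  rw [div_div_eq_mul_div, Real.sq_sqrt (div_nonneg hL h2cN.le), mul_div, le_div_iff₀ h2cN]
  nlinarith [mul_le_mul_of_nonneg_left hm hL]

namespace SelBias

variable {Z : Type*} {K : ℕ}

lemma eNorm_le_sqrt_mul {v : Fin K → ℝ} {b : ℝ} (h : ∀ l, |v l| ≤ b) :
    eNorm v ≤ √K * b := by
  rcases K.eq_zero_or_pos with rfl | hK
  · simp [eNorm]
  have hb : 0 ≤ b := (abs_nonneg _).trans (h ⟨0, hK⟩)
  calc eNorm v ≤ √(∑ _l : Fin K, b ^ 2) :=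
        Real.sqrt_le_sqrt (Finset.sum_le_sum fun l _ ↦ sq_le_sq.2 ((h l).trans (le_abs_self b)))
    _ = √K * b := by simp [Real.sqrt_mul (Nat.cast_nonneg K), Real.sqrt_sq hb]

def posteriorWeight (ω : Fin K → Z → ℝ) (u : Fin K → ℝ) (l : Fin K) (z : Z) : ℝ :=
  exp (u l) * ω l z / ∑ k, exp (u k) * ω k z

variable {ω : Fin K → Z → ℝ}

lemma posteriorWeight_mem_Icc (hω : ∀ k z, 0 ≤ ω k z) (u : Fin K → ℝ) (l : Fin K) (z : Z) :
    posteriorWeight ω u l z ∈ Set.Icc 0 1 := by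
  have hterm : ∀ k, 0 ≤ exp (u k) * ω k z := fun k ↦ mul_nonneg (exp_pos _).le (hω k z)
  exact ⟨div_nonneg (hterm l) (Finset.sum_nonneg fun k _ ↦ hterm k),
    div_le_one_of_le₀ (Finset.single_le_sum (fun k _ ↦ hterm k) (Finset.mem_univ l))
      (Finset.sum_nonneg fun k _ ↦ hterm k)⟩

variable [MeasurableSpace Z] {P : Measure Z}

lemma Dp_eq_integral_posteriorWeight_sub (lam : Fin K → ℝ) (μ : Measure Z) (u : Fin K → ℝ)
    (l : Fin K) :
    Dp ω lam μ u l = ∫ z, posteriorWeight ω u l z ∂μ - lam l := rfl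

lemma measurable_posteriorWeight (hω : ∀ k, Measurable (ω k)) (u : Fin K → ℝ) (l : Fin K) :
    Measurable (posteriorWeight ω u l) :=
  ((hω l).const_mul _).div (Finset.measurable_sum _ fun k _ ↦ (hω k).const_mul _)

lemma isProbabilityMeasure_Pk {k : Fin K} (hω : ∀ z, 0 ≤ ω k z) (hint : Integrable (ω k) P)
    (hOm : 0 < Om ω P k) :
    IsProbabilityMeasure (Pk ω P k) := by
  constructor
  rw [Pk, withDensity_apply _ MeasurableSet.univ, setLIntegral_univ,
    ← ofReal_integral_eq_lintegral_ofReal (hint.div_const _)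
      (ae_of_all _ fun z ↦ div_nonneg (hω z) hOm.le), integral_div]
  have hnormalized : (∫ z, ω k z ∂P) / Om ω P k = 1 := div_self hOm.ne'
  simp [hnormalized]

lemma integral_Pbar {lam : Fin K → ℝ} (hlam : ∀ k, 0 ≤ lam k) {f : Z → ℝ}
    (hf : ∀ k, Integrable f (Pk ω P k)) :
    ∫ z, f z ∂(Pbar ω P lam) = ∑ k, lam k * ∫ z, f z ∂(Pk ω P k) := by
  rw [Pbar, integral_finsetSum_measure fun k _ ↦ (hf k).smul_measure ENNReal.ofReal_ne_top]
  simp only [integral_smul_measure, ENNReal.toReal_ofReal (hlam _), smul_eq_mul]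

lemma integral_empDist {f : Z → ℝ} (hf : Measurable f) (m : ℕ) (Y : ℕ → Z) :
    ∫ z, f z ∂(empDist m Y) = (m : ℝ)⁻¹ * ∑ i ∈ Finset.range m, f (Y i) := by
  rw [empDist, integral_smul_measure, integral_finsetSum_measure fun i _ ↦
    integrable_dirac' hf.stronglyMeasurable enorm_lt_top]
  simp [integral_dirac' _ _ hf.stronglyMeasurable]

lemma integrable_empDist {f : Z → ℝ} (hf : Measurable f) {m : ℕ} (hm : 0 < m) (Y : ℕ → Z) :
    Integrable f (empDist m Y) :=
  (integrable_finsetSum_measure.2 fun i _ ↦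
    integrable_dirac' hf.stronglyMeasurable enorm_lt_top).smul_measure (by simp [hm.ne'])

lemma integral_pooledDist {nv : Fin K → ℕ} (hnv : ∀ k, 0 < nv k) (Y : Fin K → ℕ → Z)
    {f : Z → ℝ} (hf : Measurable f) :
    ∫ z, f z ∂(pooledDist nv Y) =
      ∑ k, (nv k : ℝ) / (∑ j, nv j : ℕ) * ∫ z, f z ∂(empDist (nv k) (Y k)) := by
  have hcoef : ∀ k, (nv k : ℝ≥0∞) / ((∑ j, nv j : ℕ) : ℝ≥0∞) ≠ ∞ := fun k ↦
    ENNReal.div_ne_top (by simp)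
      (by exact_mod_cast (Finset.sum_pos (fun j _ ↦ hnv j) ⟨k, Finset.mem_univ k⟩).ne')
  rw [pooledDist, integral_finsetSum_measure fun k _ ↦
    (integrable_empDist hf (hnv k) (Y k)).smul_measure (hcoef k)]
  simp only [integral_smul_measure, ENNReal.toReal_div, ENNReal.toReal_natCast, smul_eq_mul]

lemma measureReal_abs_integral_empDist_sub_ge_le {α : Type*} [MeasurableSpace α]
    {Pr : Measure α} [IsProbabilityMeasure Pr] {μ : Measure Z} {m : ℕ} {Y : ℕ → α → Z}
    (hY : ∀ i, Measurable (Y i)) (hlaw : ∀ i < m, Pr.map (Y i) = μ)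
    (hindep : iIndepFun (fun i : Fin m ↦ Y i) Pr) {f : Z → ℝ} (hf : Measurable f)
    (hf01 : ∀ z, f z ∈ Set.Icc 0 1) {t : ℝ} (ht : 0 ≤ t) :
    Pr.real {a | t ≤ |∫ z, f z ∂(empDist m (Y · a)) - ∫ z, f z ∂μ|} ≤
      2 * exp (-(2 * m * t ^ 2)) := by
  rcases m.eq_zero_or_pos with rfl | hm
  · simpa using measureReal_le_one.trans one_le_two
  have hm' : (0 : ℝ) < m := by exact_mod_cast hm
  have hmean : ∀ i : Fin m, Pr[f ∘ Y i] = ∫ z, f z ∂μ := fun i ↦ by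
    rw [← hlaw i i.isLt, integral_map (hY i).aemeasurable hf.aestronglyMeasurable]
    rfl
  have hcentered : ∀ a, ∫ z, f z ∂(empDist m (Y · a)) - ∫ z, f z ∂μ =
      (m : ℝ)⁻¹ * ∑ i : Fin m, (f (Y i a) - Pr[f ∘ Y i]) := fun a ↦ by
    simp only [integral_empDist hf, hmean, Finset.sum_sub_distrib, Finset.sum_const,
      Finset.card_univ, Fintype.card_fin, nsmul_eq_mul,
      Fin.sum_univ_eq_sum_range (fun i ↦ f (Y i a))]
    field_simp
  have hset : {a | t ≤ |∫ z, f z ∂(empDist m (Y · a)) - ∫ z, f z ∂μ|} =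
      {a | m * t ≤ |∑ i : Fin m, (f (Y i a) - Pr[f ∘ Y i])|} := by
    ext a
    rw [Set.mem_ofPred_eq, Set.mem_ofPred_eq, hcentered, abs_mul, abs_inv, Nat.abs_cast,
      le_inv_mul_iff₀ hm']
  rw [hset]
  refine (measureReal_abs_sum_sub_integral_ge_le (hindep.comp (fun _ ↦ f) fun _ ↦ hf)
    (fun i ↦ hf.comp (hY i)) (fun i a ↦ hf01 _) Finset.univ (by positivity)).trans_eq ?_
  simp only [Finset.card_univ, Fintype.card_fin, sub_zero, one_pow, mul_one]
  field_simp

lemma abs_Dp_pooledDist_sub_Dp_Pbar_le [∀ k, IsProbabilityMeasure (Pk ω P k)]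
    (hωmeas : ∀ k, Measurable (ω k)) (hωnn : ∀ k z, 0 ≤ ω k z) {lam : Fin K → ℝ}
    (hlam : ∀ k, 0 ≤ lam k) {nv : Fin K → ℕ} (hnv : ∀ k, 0 < nv k) (Y : Fin K → ℕ → Z)
    (u : Fin K → ℝ) (l : Fin K) {t b : ℝ}
    (hdev : ∀ k, |∫ z, posteriorWeight ω u l z ∂(empDist (nv k) (Y k)) -
      ∫ z, posteriorWeight ω u l z ∂(Pk ω P k)| ≤ t)
    (hfluct : ∀ k, |lam k - (nv k : ℝ) / (∑ j, nv j : ℕ)| ≤ b) :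
    |Dp ω (fun k ↦ (nv k : ℝ) / (∑ j, nv j : ℕ)) (pooledDist nv Y) u l -
      Dp ω lam (Pbar ω P lam) u l| ≤ t + (K + 1) * b := by
  have hN : (0 : ℝ) < (∑ j, nv j : ℕ) := by
    exact_mod_cast Finset.sum_pos (fun k _ ↦ hnv k) ⟨l, Finset.mem_univ _⟩
  have hg := posteriorWeight_mem_Icc hωnn u l
  have hint k : Integrable (posteriorWeight ω u l) (Pk ω P k) :=
    .of_mem_Icc 0 1 (measurable_posteriorWeight hωmeas u l).aemeasurable (ae_of_all _ hg)
  have hmean k : ∫ z, posteriorWeight ω u l z ∂(Pk ω P k) ∈ Set.Icc 0 1 :=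
    ⟨integral_nonneg fun z ↦ (hg z).1,
      (integral_mono (hint k) (integrable_const 1) fun z ↦ (hg z).2).trans_eq (by simp)⟩
  rw [Dp_eq_integral_posteriorWeight_sub, Dp_eq_integral_posteriorWeight_sub,
    integral_pooledDist hnv _ (measurable_posteriorWeight hωmeas u l), integral_Pbar hlam hint]
  simpa using abs_sum_mul_sub_sum_mul_le (fun k ↦ by positivity)
    (by rw [← Finset.sum_div, ← Nat.cast_sum, div_self hN.ne']) hdev hmean hfluct l

theorem gradient_deviation_at_ustar_general
    {q : ℕ} {Zs : Set (EuclideanSpace ℝ (Fin q))}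
    {K : ℕ} (hK : 0 < K)
    (P : Measure ↥Zs)
    (ω : Fin K → ↥Zs → ℝ)
    (hωmeas : ∀ k, Measurable (ω k)) (hωnn : ∀ k z, 0 ≤ ω k z)
    (hωint : ∀ k, Integrable (ω k) P)
    (hOmpos : ∀ k, 0 < Om ω P k)
    (lam : Fin K → ℝ) (hlam : ∀ k, lam k ∈ Set.Ioo (0:ℝ) 1)
    (C lamlow : ℝ) (hlamlow : 0 < lamlow)
    {α : Type} [MeasurableSpace α] (Pr : Measure α) [IsProbabilityMeasure Pr]
    (nv : Fin K → ℕ) (n : ℕ) (hn : n = ∑ k, nv k) (hnv : ∀ k, 0 < nv k)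
    (X : Fin K → ℕ → α → ↥Zs)
    (hXmeas : ∀ k i, Measurable (X k i))
    (hXlaw : ∀ k, ∀ i < nv k, Measure.map (X k i) Pr = Pk ω P k)
    (hXindep : iIndepFun
      (fun (p : Σ k : Fin K, Fin (nv k)) => fun a => X p.1 p.2 a) Pr)
    (hfluct : ∀ k, |lam k - (nv k : ℝ) / n| ≤ C / Real.sqrt n)
    (hlow : ∀ k, lamlow ≤ (nv k : ℝ) / n)
    (ustar : Fin K → ℝ)
    (δ : ℝ) (hδ : δ ∈ Set.Ioo (0:ℝ) 1) :
    ENNReal.ofReal (1 - δ) ≤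
      Pr {a |
        eNorm (fun l =>
            Dp ω (fun k => (nv k : ℝ) / n) (pooledDist nv fun k i => X k i a) ustar l -
            Dp ω lam (Pbar ω P lam) ustar l) ≤
          Real.sqrt K * (Real.sqrt (Real.log (2 * (K : ℝ) ^ 2 / δ) / (2 * lamlow * n)) +
            ((K : ℝ) + 1) * C / Real.sqrt n)} := by
  subst hn
  set t := √(log (2 * (K : ℝ) ^ 2 / δ) / (2 * lamlow * ((∑ k, nv k : ℕ) : ℝ)))
  have hN : (0 : ℝ) < (∑ k, nv k : ℕ) := by
    exact_mod_cast Finset.sum_pos (fun k _ ↦ hnv k) ⟨⟨0, hK⟩, Finset.mem_univ _⟩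
  have hδK : δ ≤ 2 * (K : ℝ) ^ 2 := by
    nlinarith [hδ.2, (show (1 : ℝ) ≤ K by exact_mod_cast hK)]
  have hPk k := isProbabilityMeasure_Pk (hωnn k) (hωint k) (hOmpos k)
  refine le_trans (le_of_eq ?_) <| ofReal_one_sub_sum_le_measure .univ
    (B := fun kl : Fin K × Fin K ↦ {a | t ≤
      |∫ z, posteriorWeight ω ustar kl.2 z ∂(empDist (nv kl.1) (X kl.1 · a)) -
        ∫ z, posteriorWeight ω ustar kl.2 z ∂(Pk ω P kl.1)|})
    (η := fun _ ↦ δ / K ^ 2) (fun kl _ ↦ ?_) fun a ha ↦ ?_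
  · congr 1
    simp only [Finset.sum_const, Finset.card_univ, Fintype.card_prod, Fintype.card_fin,
      nsmul_eq_mul]
    push_cast
    field_simp
  · exact (measureReal_abs_integral_empDist_sub_ge_le (hXmeas kl.1) (hXlaw kl.1)
      (hXindep.precomp sigma_mk_injective) (measurable_posteriorWeight hωmeas ustar kl.2)
      (posteriorWeight_mem_Icc hωnn ustar kl.2) (sqrt_nonneg _)).trans
      (two_mul_exp_neg_mul_sqrt_sq_le_div hδ.1 hδK (mul_pos hlamlow hN)
        ((le_div_iff₀ hN).1 (hlow kl.1)))
  · refine eNorm_le_sqrt_mul fun l ↦ (abs_Dp_pooledDist_sub_Dp_Pbar_le hωmeas hωnn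
      (fun k ↦ (hlam k).1.le) hnv _ ustar l
      (fun k ↦ (not_le.1 (ha (k, l) (Finset.mem_univ _))).le) hfluct).trans_eq ?_
    rw [mul_div_assoc]

/-- Deviation bound for the empirical gradient at the true optimum `u*`. -/
theorem gradient_deviation_at_ustar
    {q : ℕ} {Zs : Set (EuclideanSpace ℝ (Fin q))} (hZs : MeasurableSet Zs)
    {K : ℕ} (hK : 0 < K)
    (P : Measure ↥Zs) [IsProbabilityMeasure P]
    (ω : Fin K → ↥Zs → ℝ)
    (hωmeas : ∀ k, Measurable (ω k)) (hωnn : ∀ k z, 0 ≤ ω k z)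
    (hωint : ∀ k, Integrable (ω k) P)
    (hOmpos : ∀ k, 0 < Om ω P k)
    (lam : Fin K → ℝ) (hlam : ∀ k, lam k ∈ Set.Ioo (0:ℝ) 1) (hlamsum : ∑ k, lam k = 1)
    (C lamlow lammin : ℝ) (hC : 0 ≤ C) (hlamlow : 0 < lamlow) (hlammin : 0 < lammin)
    (hlammin' : ∀ k, lammin ≤ lam k)
    {α : Type} [MeasurableSpace α] (Pr : Measure α) [IsProbabilityMeasure Pr]
    (nv : Fin K → ℕ) (n : ℕ) (hn : n = ∑ k, nv k) (hnv : ∀ k, 0 < nv k)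
    (X : Fin K → ℕ → α → ↥Zs)
    (hXmeas : ∀ k i, Measurable (X k i))
    (hXlaw : ∀ k, ∀ i < nv k, Measure.map (X k i) Pr = Pk ω P k)
    (hXindep : iIndepFun
      (fun (p : Σ k : Fin K, Fin (nv k)) => fun a => X p.1 p.2 a) Pr)
    (hfluct : ∀ k, |lam k - (nv k : ℝ) / n| ≤ C / Real.sqrt n)
    (hlow : ∀ k, lamlow ≤ (nv k : ℝ) / n)
    (ustar : Fin K → ℝ)
    (hnorm : ustar ⟨K - 1, Nat.sub_lt hK one_pos⟩ =
      Real.log (lam ⟨K - 1, Nat.sub_lt hK one_pos⟩))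
    (hzero : ∀ l, Dp ω lam (Pbar ω P lam) ustar l = 0)
    (δ : ℝ) (hδ : δ ∈ Set.Ioo (0:ℝ) 1) :
    ENNReal.ofReal (1 - δ) ≤
      Pr {a |
        eNorm (fun l =>
            Dp ω (fun k => (nv k : ℝ) / n) (pooledDist nv fun k i => X k i a) ustar l -
            Dp ω lam (Pbar ω P lam) ustar l) ≤
          Real.sqrt K * (Real.sqrt (Real.log (2 * (K : ℝ) ^ 2 / δ) / (2 * lamlow * n)) +
            ((K : ℝ) + 1) * C / Real.sqrt n)} :=
  gradient_deviation_at_ustar_general hK P ω hωmeas hωnn hωint hOmpos lam hlam C lamlow hlamlow Pr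
    nv n hn hnv X hXmeas hXlaw hXindep hfluct hlow ustar δ hδ

end SelBias
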